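/- The bound of n² − n is tight: for every n there is an instance (agents indifferent about rooms) where the serial dictatorship output assignment has exactly n² − n 2PS blocking pairs. For n = 3 this is realized by the instance with agents a1..a6, all room values 1, where SD with order a1,...,a6 outputs {(a1,a2,r1),(a3,a4,r2),(a5,a6,r3)} and this assignment has exactly the 6 blocking pairs (a2,a3),(a2,a4),(a2,a5),(a2,a6),(a4,a5),(a4,a6) under the valuations: h_{a1}=(−,5,4,3,2,1), h_{a2}=(1,−,5,4,3,2), h_{a3}=(5,4,−,3,2,1), h_{a4}=(5,4,1,−,3,2), h_{a5}=(5,4,3,2,−,1), h_{a6}=(5,4,3,2,1,−). -/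
import Mathlib


/-- A roommate assignment: each agent has a roommate (`mate`) and a room (`room`);
roommates share a room and each room hosts exactly one pair. -/
structure Assignment (A R : Type*) where
  mate : A → A
  room : A → R
  mate_ne_self : ∀ i, mate i ≠ i
  mate_invol : ∀ i, mate (mate i) = i
  room_mate : ∀ i, room (mate i) = room i
  room_eq_iff : ∀ i j, room i = room j ↔ (j = i ∨ j = mate i)

variable {A R : Type*}

/-- Utility of agent `i` in assignment `μ`: happiness for the roommate plus value of the room. -/
def util (h : A → A → ℝ) (v : A → R → ℝ) (μ : Assignment A R) (i : A) : ℝ :=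
  h i (μ.mate i) + v i (μ.room i)

/-- `(i,j)` is a 2-person-stable blocking pair: they live in different rooms and both would
strictly gain by swapping places. -/
def blocking2PS (h : A → A → ℝ) (v : A → R → ℝ) (μ : Assignment A R) (i j : A) : Prop :=
  μ.room i ≠ μ.room j ∧
  h i (μ.mate j) + v i (μ.room j) > h i (μ.mate i) + v i (μ.room i) ∧
  h j (μ.mate i) + v j (μ.room i) > h j (μ.mate j) + v j (μ.room j)

/-- `(i,j)` is a 4-person-stable blocking pair: in addition, both displaced roommates
strictly prefer their new roommate. -/
def blocking4PS (h : A → A → ℝ) (v : A → R → ℝ) (μ : Assignment A R) (i j : A) : Prop :=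
  blocking2PS h v μ i j ∧
  h (μ.mate i) j > h (μ.mate i) i ∧
  h (μ.mate j) i > h (μ.mate j) j

def is2PS (h : A → A → ℝ) (v : A → R → ℝ) (μ : Assignment A R) : Prop :=
  ∀ i j, ¬ blocking2PS h v μ i j

def is4PS (h : A → A → ℝ) (v : A → R → ℝ) (μ : Assignment A R) : Prop :=
  ∀ i j, ¬ blocking4PS h v μ i j

/-- `μ'` Pareto dominates `μ`. -/
def ParetoDom (h : A → A → ℝ) (v : A → R → ℝ) (μ' μ : Assignment A R) : Prop :=
  (∀ i, util h v μ i ≤ util h v μ' i) ∧ ∃ i, util h v μ i < util h v μ' i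

def ParetoOpt (h : A → A → ℝ) (v : A → R → ℝ) (μ : Assignment A R) : Prop :=
  ∀ μ', ¬ ParetoDom h v μ' μ

/-- `μ'` is the result of swapping agents `i` and `j` in `μ`. -/
def IsSwap (μ μ' : Assignment A R) (i j : A) : Prop :=
  μ'.mate i = μ.mate j ∧ μ'.room i = μ.room j ∧
  μ'.mate j = μ.mate i ∧ μ'.room j = μ.room i ∧
  μ'.room (μ.mate i) = μ.room i ∧ μ'.room (μ.mate j) = μ.room j ∧
  ∀ k, k ≠ i → k ≠ j → k ≠ μ.mate i → k ≠ μ.mate j →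
    μ'.mate k = μ.mate k ∧ μ'.room k = μ.room k

/-- Social welfare: the sum of all agents' utilities. -/
noncomputable def SW [Fintype A] (h : A → A → ℝ) (v : A → R → ℝ) (μ : Assignment A R) : ℝ :=
  ∑ i, util h v μ i

/-- The picker (dominant agent) of the triple containing `i`. -/
def pk (σ : A → ℕ) (μ : Assignment A R) (i : A) : A :=
  if σ i < σ (μ.mate i) then i else μ.mate i

/-- The defining invariant of the output of serial dictatorship with priority order `σ`. -/
def SDInv (σ : A → ℕ) (h : A → A → ℝ) (v : A → R → ℝ) (μ : Assignment A R) : Prop :=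
  ∀ i, σ i < σ (μ.mate i) →
    ∀ j, σ i < σ (pk σ μ j) →
      h i (μ.mate i) ≥ h i j ∧ v i (μ.room i) ≥ v i (μ.room j)

/-- Happiness values of the tight example for n = 3 (agents a1..a6 = 0..5). -/
def hEx8 : Fin 6 → Fin 6 → ℝ :=
  ![![0,5,4,3,2,1], ![1,0,5,4,3,2], ![5,4,0,3,2,1],
    ![5,4,1,0,3,2], ![5,4,3,2,0,1], ![5,4,3,2,1,0]]

/-- All rooms are valued 1 (agents indifferent about rooms). -/
def vEx8 : Fin 6 → Fin 3 → ℝ := fun _ _ => 1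

/-- SD output {(a1,a2,r1),(a3,a4,r2),(a5,a6,r3)}. -/
def μEx8 : Assignment (Fin 6) (Fin 3) :=
  ⟨![1,0,3,2,5,4], ![0,0,1,1,2,2], by decide, by decide, by decide, by decide⟩

@[simp] lemma finmk6_0 (h : 0 < 6) : (⟨0, h⟩ : Fin 6) = 0 := rfl
@[simp] lemma finmk6_1 (h : 1 < 6) : (⟨1, h⟩ : Fin 6) = 1 := rfl
@[simp] lemma finmk6_2 (h : 2 < 6) : (⟨2, h⟩ : Fin 6) = 2 := rfl
@[simp] lemma finmk6_3 (h : 3 < 6) : (⟨3, h⟩ : Fin 6) = 3 := rfl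
@[simp] lemma finmk6_4 (h : 4 < 6) : (⟨4, h⟩ : Fin 6) = 4 := rfl
@[simp] lemma finmk6_5 (h : 5 < 6) : (⟨5, h⟩ : Fin 6) = 5 := rfl
@[simp] lemma finmk3_0 (h : 0 < 3) : (⟨0, h⟩ : Fin 3) = 0 := rfl
@[simp] lemma finmk3_1 (h : 1 < 3) : (⟨1, h⟩ : Fin 3) = 1 := rfl
@[simp] lemma finmk3_2 (h : 2 < 3) : (⟨2, h⟩ : Fin 3) = 2 := rfl
@[simp] lemma hEx8_0_0 : hEx8 0 0 = 0 := rfl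
@[simp] lemma hEx8_0_1 : hEx8 0 1 = 5 := rfl
@[simp] lemma hEx8_0_2 : hEx8 0 2 = 4 := rfl
@[simp] lemma hEx8_0_3 : hEx8 0 3 = 3 := rfl
@[simp] lemma hEx8_0_4 : hEx8 0 4 = 2 := rfl
@[simp] lemma hEx8_0_5 : hEx8 0 5 = 1 := rfl
@[simp] lemma hEx8_1_0 : hEx8 1 0 = 1 := rfl
@[simp] lemma hEx8_1_1 : hEx8 1 1 = 0 := rfl
@[simp] lemma hEx8_1_2 : hEx8 1 2 = 5 := rfl
@[simp] lemma hEx8_1_3 : hEx8 1 3 = 4 := rfl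
@[simp] lemma hEx8_1_4 : hEx8 1 4 = 3 := rfl
@[simp] lemma hEx8_1_5 : hEx8 1 5 = 2 := rfl
@[simp] lemma hEx8_2_0 : hEx8 2 0 = 5 := rfl
@[simp] lemma hEx8_2_1 : hEx8 2 1 = 4 := rfl
@[simp] lemma hEx8_2_2 : hEx8 2 2 = 0 := rfl
@[simp] lemma hEx8_2_3 : hEx8 2 3 = 3 := rfl
@[simp] lemma hEx8_2_4 : hEx8 2 4 = 2 := rfl
@[simp] lemma hEx8_2_5 : hEx8 2 5 = 1 := rfl
@[simp] lemma hEx8_3_0 : hEx8 3 0 = 5 := rfl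
@[simp] lemma hEx8_3_1 : hEx8 3 1 = 4 := rfl
@[simp] lemma hEx8_3_2 : hEx8 3 2 = 1 := rfl
@[simp] lemma hEx8_3_3 : hEx8 3 3 = 0 := rfl
@[simp] lemma hEx8_3_4 : hEx8 3 4 = 3 := rfl
@[simp] lemma hEx8_3_5 : hEx8 3 5 = 2 := rfl
@[simp] lemma hEx8_4_0 : hEx8 4 0 = 5 := rfl
@[simp] lemma hEx8_4_1 : hEx8 4 1 = 4 := rfl
@[simp] lemma hEx8_4_2 : hEx8 4 2 = 3 := rfl
@[simp] lemma hEx8_4_3 : hEx8 4 3 = 2 := rfl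
@[simp] lemma hEx8_4_4 : hEx8 4 4 = 0 := rfl
@[simp] lemma hEx8_4_5 : hEx8 4 5 = 1 := rfl
@[simp] lemma hEx8_5_0 : hEx8 5 0 = 5 := rfl
@[simp] lemma hEx8_5_1 : hEx8 5 1 = 4 := rfl
@[simp] lemma hEx8_5_2 : hEx8 5 2 = 3 := rfl
@[simp] lemma hEx8_5_3 : hEx8 5 3 = 2 := rfl
@[simp] lemma hEx8_5_4 : hEx8 5 4 = 1 := rfl
@[simp] lemma hEx8_5_5 : hEx8 5 5 = 0 := rfl
@[simp] lemma mEx8_0 : μEx8.mate 0 = 1 := rfl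
@[simp] lemma rEx8_0 : μEx8.room 0 = 0 := rfl
@[simp] lemma mEx8_1 : μEx8.mate 1 = 0 := rfl
@[simp] lemma rEx8_1 : μEx8.room 1 = 0 := rfl
@[simp] lemma mEx8_2 : μEx8.mate 2 = 3 := rfl
@[simp] lemma rEx8_2 : μEx8.room 2 = 1 := rfl
@[simp] lemma mEx8_3 : μEx8.mate 3 = 2 := rfl
@[simp] lemma rEx8_3 : μEx8.room 3 = 1 := rfl
@[simp] lemma mEx8_4 : μEx8.mate 4 = 5 := rfl
@[simp] lemma rEx8_4 : μEx8.room 4 = 2 := rfl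
@[simp] lemma mEx8_5 : μEx8.mate 5 = 4 := rfl
@[simp] lemma rEx8_5 : μEx8.room 5 = 2 := rfl
def mval (x : ℕ) : ℕ := if x % 2 = 0 then x + 1 else x - 1

def μT (n : ℕ) : Assignment (Fin (2*n)) (Fin n) where
  mate i := ⟨mval i.val, by have := i.isLt; simp only [mval]; split <;> omega⟩
  room i := ⟨i.val / 2, by have := i.isLt; omega⟩
  mate_ne_self i := by
    have := i.isLt
    simp only [Ne, Fin.ext_iff, mval]
    split <;> omega
  mate_invol i := by
    have := i.isLt
    apply Fin.ext
    simp only [mval]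
    split_ifs <;> omega
  room_mate i := by
    have := i.isLt
    apply Fin.ext
    simp only [mval]
    split <;> omega
  room_eq_iff i j := by
    have := i.isLt; have := j.isLt
    simp only [Fin.ext_iff, mval]
    constructor
    · intro h; split_ifs <;> omega
    · rintro (h | h)
      · omega
      · split_ifs at h <;> omega

lemma mateT_val (n : ℕ) (i : Fin (2*n)) : ((μT n).mate i).val = mval i.val := rfl
lemma roomT_val (n : ℕ) (i : Fin (2*n)) : ((μT n).room i).val = i.val / 2 := rfl

noncomputable def hT (n : ℕ) (i j : Fin (2*n)) : ℝ :=
  if j.val / 2 < i.val / 2 then 2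
  else if j.val / 2 = i.val / 2 then 0
  else if i.val % 2 = 1 then 1 else 0
lemma hT_lt {n : ℕ} {i j : Fin (2*n)} (h : j.val / 2 < i.val / 2) : hT n i j = 2 := by
  rw [hT, if_pos h]

lemma hT_eq {n : ℕ} {i j : Fin (2*n)} (h : j.val / 2 = i.val / 2) : hT n i j = 0 := by
  rw [hT, if_neg (by omega), if_pos h]

lemma hT_gt_odd {n : ℕ} {i j : Fin (2*n)} (h : i.val / 2 < j.val / 2)
    (ho : i.val % 2 = 1) : hT n i j = 1 := by
  rw [hT, if_neg (by omega), if_neg (by omega), if_pos ho]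

lemma hT_gt_even {n : ℕ} {i j : Fin (2*n)} (h : i.val / 2 < j.val / 2)
    (ho : i.val % 2 = 0) : hT n i j = 0 := by
  rw [hT, if_neg (by omega), if_neg (by omega), if_neg (by omega)]

lemma mateT_div {n : ℕ} (i : Fin (2*n)) : ((μT n).mate i).val / 2 = i.val / 2 := by
  have := i.isLt
  rw [mateT_val]; simp only [mval]; split <;> omega

lemma pkT_val {n : ℕ} (j : Fin (2*n)) :
    (pk Fin.val (μT n) j).val = 2 * (j.val / 2) := by
  have hjl := j.isLt
  by_cases hje : j.val % 2 = 0
  · have h1 : ((μT n).mate j).val = j.val + 1 := by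
      rw [mateT_val]; simp [mval, hje]
    rw [pk, if_pos (show Fin.val j < Fin.val ((μT n).mate j) by rw [h1]; omega)]
    omega
  · have h1 : ((μT n).mate j).val = j.val - 1 := by
      rw [mateT_val]; simp only [mval]; split <;> omega
    rw [pk, if_neg (show ¬ Fin.val j < Fin.val ((μT n).mate j) by rw [h1]; omega), h1]
    omega

lemma sdinvT (n : ℕ) : SDInv Fin.val (hT n) (fun _ _ => (1:ℝ)) (μT n) := by
  intro i hi j hj
  refine ⟨?_, le_refl 1⟩
  rw [show Fin.val ((μT n).mate i) = mval i.val from mateT_val n i] at hi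
  have hie : i.val % 2 = 0 := by
    simp only [mval] at hi; split at hi <;> omega
  rw [pkT_val] at hj
  have hij : i.val / 2 < j.val / 2 := by omega
  rw [hT_eq (mateT_div i), hT_gt_even hij hie]

lemma blockT (n : ℕ) (i j : Fin (2*n)) (hij : i < j) :
    blocking2PS (hT n) (fun _ _ => (1:ℝ)) (μT n) i j ↔
      i.val % 2 = 1 ∧ i.val / 2 < j.val / 2 := by
  have hij' : i.val < j.val := hij
  have hroom : ((μT n).room i ≠ (μT n).room j) ↔ i.val / 2 ≠ j.val / 2 := by
    simp only [Ne, Fin.ext_iff, roomT_val]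
  have hpi := mateT_div i
  have hpj := mateT_div j
  unfold blocking2PS
  rw [hroom]
  constructor
  · rintro ⟨h1, h2, h3⟩
    have hij2 : i.val / 2 < j.val / 2 := by omega
    refine ⟨?_, hij2⟩
    by_contra hodd
    have hie : i.val % 2 = 0 := by omega
    rw [hT_eq hpi, hT_gt_even (by omega : i.val/2 < ((μT n).mate j).val/2) hie] at h2
    linarith
  · rintro ⟨h1, h2⟩
    refine ⟨by omega, ?_, ?_⟩
    · rw [hT_eq hpi, hT_gt_odd (by omega : i.val/2 < ((μT n).mate j).val/2) h1]
      norm_num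
    · rw [hT_eq hpj, hT_lt (by omega : ((μT n).mate i).val/2 < j.val/2)]
      norm_num
def fwdT (n : ℕ) (p : Fin (2*n) × Fin (2*n)) : Fin n × Fin n :=
  if p.2.val % 2 = 0 then
    (⟨p.1.val/2, by have := p.1.isLt; omega⟩, ⟨p.2.val/2, by have := p.2.isLt; omega⟩)
  else
    (⟨p.2.val/2, by have := p.2.isLt; omega⟩, ⟨p.1.val/2, by have := p.1.isLt; omega⟩)

def bwdT (n : ℕ) (q : Fin n × Fin n) : Fin (2*n) × Fin (2*n) :=
  if q.1.val < q.2.val then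
    (⟨2*q.1.val+1, by have := q.1.isLt; omega⟩, ⟨2*q.2.val, by have := q.2.isLt; omega⟩)
  else
    (⟨2*q.2.val+1, by have := q.2.isLt; omega⟩, ⟨2*q.1.val+1, by have := q.1.isLt; omega⟩)

lemma cardT (n : ℕ) :
    ((Finset.univ : Finset (Fin (2*n) × Fin (2*n))).filter
      (fun p => p.1.val % 2 = 1 ∧ p.1.val / 2 < p.2.val / 2)).card = n^2 - n := by
  have key : ((Finset.univ : Finset (Fin (2*n) × Fin (2*n))).filter
      (fun p => p.1.val % 2 = 1 ∧ p.1.val / 2 < p.2.val / 2)).card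
      = ((Finset.univ : Finset (Fin n)).offDiag).card := by
    apply Finset.card_bij' (fun p _ => fwdT n p) (fun q _ => bwdT n q)
    · intro p hp
      simp only [Finset.mem_filter, Finset.mem_univ, true_and] at hp
      simp only [Finset.mem_offDiag, Finset.mem_univ, true_and, fwdT]
      split_ifs <;> simp only [Ne, Prod.fst, Prod.snd, Fin.mk.injEq] <;> omega
    · intro q hq
      simp only [Finset.mem_offDiag, Finset.mem_univ, true_and] at hq
      have hq' : q.1.val ≠ q.2.val := fun h => hq (Fin.ext h)
      simp only [Finset.mem_filter, Finset.mem_univ, true_and, bwdT]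
      split_ifs <;> simp only [Prod.fst, Prod.snd] <;> omega
    · intro p hp
      simp only [Finset.mem_filter, Finset.mem_univ, true_and] at hp
      have hp1 := p.1.isLt; have hp2 := p.2.isLt
      simp only [fwdT, bwdT]
      split_ifs <;> simp_all [Prod.ext_iff, Fin.ext_iff] <;> omega
    · intro q hq
      simp only [Finset.mem_offDiag, Finset.mem_univ, true_and] at hq
      have hq' : q.1.val ≠ q.2.val := fun h => hq (Fin.ext h)
      simp only [fwdT, bwdT]
      split_ifs <;> simp_all [Prod.ext_iff, Fin.ext_iff] <;> omega
  rw [key, Finset.offDiag_card, Finset.card_univ, Fintype.card_fin, pow_two]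

lemma ncardT (n : ℕ) :
    {p : Fin (2*n) × Fin (2*n) | p.1 < p.2 ∧
        blocking2PS (hT n) (fun _ _ => (1:ℝ)) (μT n) p.1 p.2}.ncard = n^2 - n := by
  have hset : {p : Fin (2*n) × Fin (2*n) | p.1 < p.2 ∧
        blocking2PS (hT n) (fun _ _ => (1:ℝ)) (μT n) p.1 p.2}
      = ↑((Finset.univ : Finset (Fin (2*n) × Fin (2*n))).filter
          (fun p => p.1.val % 2 = 1 ∧ p.1.val / 2 < p.2.val / 2)) := by
    ext ⟨i, j⟩
    simp only [Set.mem_setOf_eq, Finset.coe_filter, Finset.mem_univ, true_and,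
      Set.mem_setOf_eq]
    constructor
    · rintro ⟨h1, h2⟩
      exact (blockT n i j h1).1 h2
    · rintro ⟨h1, h2⟩
      have hlt : i < j := by
        rw [Fin.lt_def]; omega
      exact ⟨hlt, (blockT n i j hlt).2 ⟨h1, h2⟩⟩
  rw [hset, Set.ncard_coe_finset, cardT]
lemma sdinvEx : SDInv Fin.val hEx8 vEx8 μEx8 := by
  intro i hi j hj
  fin_cases i <;> fin_cases j <;> simp only [finmk6_0, finmk6_1, finmk6_2, finmk6_3, finmk6_4, finmk6_5] at * <;>
    first
    | (exfalso; revert hi hj; decide)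
    | exact ⟨by norm_num, le_refl _⟩

lemma setEx : {p : Fin 6 × Fin 6 | p.1 < p.2 ∧ blocking2PS hEx8 vEx8 μEx8 p.1 p.2}
    = ({(1,2), (1,3), (1,4), (1,5), (3,4), (3,5)} : Set (Fin 6 × Fin 6)) := by
  ext ⟨i, j⟩
  simp only [Set.mem_setOf_eq, Set.mem_insert_iff, Set.mem_singleton_iff, Prod.mk.injEq]
  fin_cases i <;> fin_cases j <;>
    simp only [finmk6_0, finmk6_1, finmk6_2, finmk6_3, finmk6_4, finmk6_5] <;>
    norm_num [blocking2PS, vEx8] <;> decide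

/-- The bound n² − n is tight: for every n there is an instance with agents
indifferent about rooms whose SD output has exactly n² − n 2PS blocking pairs; for n = 3
this is realized by the concrete instance `hEx8, vEx8, μEx8`, whose blocking pairs are
exactly (a2,a3),(a2,a4),(a2,a5),(a2,a6),(a4,a5),(a4,a6). -/
theorem sd_blocking_bound_tight :
    (∀ n : ℕ, ∃ (σ : Fin (2*n) → ℕ) (h : Fin (2*n) → Fin (2*n) → ℝ)
      (v : Fin (2*n) → Fin n → ℝ) (μ : Assignment (Fin (2*n)) (Fin n)),
        Function.Injective σ ∧ (∀ i r r', v i r = v i r') ∧ SDInv σ h v μ ∧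
        {p : Fin (2*n) × Fin (2*n) | p.1 < p.2 ∧ blocking2PS h v μ p.1 p.2}.ncard
          = n ^ 2 - n) ∧
    SDInv (Fin.val) hEx8 vEx8 μEx8 ∧
    {p : Fin 6 × Fin 6 | p.1 < p.2 ∧ blocking2PS hEx8 vEx8 μEx8 p.1 p.2}
      = ({(1,2), (1,3), (1,4), (1,5), (3,4), (3,5)} : Set (Fin 6 × Fin 6)) ∧
    {p : Fin 6 × Fin 6 | p.1 < p.2 ∧ blocking2PS hEx8 vEx8 μEx8 p.1 p.2}.ncard
      = 3 ^ 2 - 3 := by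
  refine ⟨fun n => ⟨Fin.val, hT n, fun _ _ => (1:ℝ), μT n, Fin.val_injective,
    fun _ _ _ => rfl, sdinvT n, ncardT n⟩, sdinvEx, setEx, ?_⟩
  rw [setEx, show ({(1,2), (1,3), (1,4), (1,5), (3,4), (3,5)} : Set (Fin 6 × Fin 6))
      = ↑({(1,2), (1,3), (1,4), (1,5), (3,4), (3,5)} : Finset (Fin 6 × Fin 6)) by simp,
    Set.ncard_coe_finset]
  decide
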